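/- arXiv:2501.11275 — 2 statements merged into one kernel-verified Lean document; each statement's English description precedes it below -/
import Mathlib

section
/- Let l, k, n ∈ ℕ₊ and M > 0. There exist a depth J ≤ l·⌈(n−1)k/(s−1)⌉, a depth-J CNN h_J with input dimension nk + kl(n−1), and integers n₁, n₂ ≥ 0 such that for all vectors y_1, …, y_n ∈ [0,M]^k one has h_J([y_1; 0_{kl(n−1)}; y_2; …; y_n]) = [0_{n₁}; y_1; y_2; …; y_n; 0_{n₂}]. -/
noncomputable section

open Finset

/-- The ReLU function. -/
def relu (t : ℝ) : ℝ := max t 0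

/-- Zero extension of a filter `w ∈ ℝ^{m+1}` to all of `ℕ` (`w_j := 0` for `j ∉ {0,…,m}`). -/
def filt {m : ℕ} (w : Fin (m + 1) → ℝ) : ℕ → ℝ :=
  fun j => if h : j < m + 1 then w ⟨j, h⟩ else 0

/-- Discrete convolution of a filter `w ∈ ℝ^{m+1}` with a vector `x ∈ ℝ^n`
(represented as `x : ℕ → ℝ`, entries of index `≥ n` being ignored), producing a vector
in `ℝ^{n+m}`: `(w*x)_i = ∑_{k<n} w_{i-k} x_k` (zero-based indexing). -/
def conv {m : ℕ} (w : Fin (m + 1) → ℝ) (n : ℕ) (x : ℕ → ℝ) : ℕ → ℝ :=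
  fun i => ∑ k ∈ Finset.range n, if k ≤ i then filt w (i - k) * x k else 0

/-- One CNN layer with filter `w ∈ ℝ^{s+1}` and bias `b`, acting on a vector of length `n`:
`x ↦ σ(w*x + b) ∈ ℝ^{n+s}` (entries of index `≥ n+s` are set to `0`). -/
def layer (s : ℕ) (w : Fin (s + 1) → ℝ) (b : ℕ → ℝ) (n : ℕ) (x : ℕ → ℝ) : ℕ → ℝ :=
  fun i => if i < n + s then relu (conv w n x i + b i) else 0

/-- Apply a list of CNN layers (given by their filter/bias pairs) to a vector of length `n`;
a list of length `L` yields the depth-`L` CNN map `h_L = σ∘A_{w_L,b_L}∘⋯∘σ∘A_{w_1,b_1}`. -/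
def applyCNN (s : ℕ) : List ((Fin (s + 1) → ℝ) × (ℕ → ℝ)) → ℕ → (ℕ → ℝ) → (ℕ → ℝ)
  | [], _, x => x
  | wb :: ps, n, x => applyCNN s ps (n + s) (layer s wb.1 wb.2 n x)

/-- A vector `x ∈ ℝ^n` viewed as an element of `ℕ → ℝ` (zero outside `{0,…,n-1}`). -/
def embed (n : ℕ) (x : Fin n → ℝ) : ℕ → ℝ := fun i => if h : i < n then x ⟨i, h⟩ else 0

open Polynomial

-- auxiliary defs
def polyFilt (s : ℕ) (q : ℝ[X]) : Fin (s + 1) → ℝ := fun j => q.coeff j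

def convK (s : ℕ) (q : ℝ[X]) (len i : ℕ) : ℝ :=
  ∑ k ∈ Finset.range len, if k ≤ i then filt (polyFilt s q) (i - k) else 0

def norm1 (q : ℝ[X]) : ℝ := ∑ j ∈ Finset.range (q.natDegree + 1), |q.coeff j|

lemma filt_polyFilt (s : ℕ) (q : ℝ[X]) (hq : q.natDegree ≤ s) (j : ℕ) :
    filt (polyFilt s q) j = q.coeff j := by
  unfold filt polyFilt
  split
  · rfl
  · exact (Polynomial.coeff_eq_zero_of_natDegree_lt (by omega)).symm

lemma relu_of_nonneg {t : ℝ} (h : 0 ≤ t) : relu t = t := max_eq_left h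

lemma relu_of_nonpos {t : ℝ} (h : t ≤ 0) : relu t = 0 := max_eq_right h

lemma norm1_nonneg (q : ℝ[X]) : 0 ≤ norm1 q :=
  Finset.sum_nonneg fun _ _ => abs_nonneg _

lemma sum_abs_coeff_le (q : ℝ[X]) (m : ℕ) :
    ∑ j ∈ Finset.range m, |q.coeff j| ≤ norm1 q := by
  have h1 : ∑ j ∈ Finset.range m, |q.coeff j|
      ≤ ∑ j ∈ Finset.range (max m (q.natDegree + 1)), |q.coeff j| :=
    Finset.sum_le_sum_of_subset_of_nonneg
      (Finset.range_subset_range.2 (le_max_left _ _)) (fun _ _ _ => abs_nonneg _)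
  have h2 : ∑ j ∈ Finset.range (max m (q.natDegree + 1)), |q.coeff j| = norm1 q := by
    unfold norm1
    refine (Finset.sum_subset (Finset.range_subset_range.2 (le_max_right _ _)) ?_).symm
    intro j hj hj'
    simp only [Finset.mem_range] at hj hj'
    rw [Polynomial.coeff_eq_zero_of_natDegree_lt (by omega), abs_zero]
  linarith

lemma coeff_mul_bound (q A : ℝ[X]) (D : ℝ) (hD : ∀ i, |A.coeff i| ≤ D) (i : ℕ) :
    |(q * A).coeff i| ≤ norm1 q * D := by
  have hD0 : 0 ≤ D := le_trans (abs_nonneg _) (hD 0)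
  rw [Polynomial.coeff_mul]
  calc |∑ x ∈ Finset.HasAntidiagonal.antidiagonal i, q.coeff x.1 * A.coeff x.2|
      ≤ ∑ x ∈ Finset.HasAntidiagonal.antidiagonal i, |q.coeff x.1 * A.coeff x.2| :=
        Finset.abs_sum_le_sum_abs _ _
    _ ≤ ∑ x ∈ Finset.HasAntidiagonal.antidiagonal i, |q.coeff x.1| * D := by
        refine Finset.sum_le_sum fun x _ => ?_
        rw [abs_mul]
        exact mul_le_mul_of_nonneg_left (hD x.2) (abs_nonneg _)
    _ = (∑ x ∈ Finset.HasAntidiagonal.antidiagonal i, |q.coeff x.1|) * D := by rw [Finset.sum_mul]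
    _ ≤ norm1 q * D := by
        refine mul_le_mul_of_nonneg_right ?_ hD0
        rw [Finset.Nat.sum_antidiagonal_eq_sum_range_succ (fun a b => |q.coeff a|)]
        exact sum_abs_coeff_le q _

lemma conv_poly (s : ℕ) (q A : ℝ[X]) (hq : q.natDegree ≤ s) (len : ℕ)
    (hA : A.natDegree < len) (C : ℝ) (i : ℕ) :
    conv (polyFilt s q) len (fun t => if t < len then A.coeff t + C else 0) i
      = (q * A).coeff i + C * convK s q len i := by
  unfold conv convK
  have hsplit : ∀ k ∈ Finset.range len,
      (if k ≤ i then filt (polyFilt s q) (i - k) *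
        (if k < len then A.coeff k + C else 0) else 0)
      = (if k ≤ i then q.coeff (i - k) * A.coeff k else 0)
        + C * (if k ≤ i then filt (polyFilt s q) (i - k) else 0) := by
    intro k hk
    rw [Finset.mem_range] at hk
    rw [if_pos hk, filt_polyFilt s q hq]
    split
    · ring
    · ring
  rw [Finset.sum_congr rfl hsplit, Finset.sum_add_distrib, ← Finset.mul_sum]
  congr 1
  -- remains: ∑ k ∈ range len, (if k ≤ i then q.coeff (i-k) * A.coeff k else 0) = (q*A).coeff i
  have hcoeffA : ∀ k, len ≤ k → A.coeff k = 0 := fun k hk =>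
    Polynomial.coeff_eq_zero_of_natDegree_lt (by omega)
  have hL : ∑ k ∈ Finset.range len, (if k ≤ i then q.coeff (i - k) * A.coeff k else 0)
      = ∑ k ∈ Finset.range (len + i + 1), (if k ≤ i then q.coeff (i - k) * A.coeff k else 0) := by
    refine Finset.sum_subset (Finset.range_subset_range.2 (by omega)) ?_
    intro k hk hk'
    simp only [Finset.mem_range] at hk hk'
    rw [hcoeffA k (by omega)]
    split <;> ring
  have hR : (q * A).coeff i
      = ∑ k ∈ Finset.range (len + i + 1), (if k ≤ i then q.coeff (i - k) * A.coeff k else 0) := by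
    rw [mul_comm, Polynomial.coeff_mul,
      Finset.Nat.sum_antidiagonal_eq_sum_range_succ (fun a b => A.coeff a * q.coeff b)]
    have : ∑ k ∈ Finset.range (i + 1), A.coeff k * q.coeff (i - k)
        = ∑ k ∈ Finset.range (i + 1), (if k ≤ i then q.coeff (i - k) * A.coeff k else 0) := by
      refine Finset.sum_congr rfl fun k hk => ?_
      rw [Finset.mem_range] at hk
      rw [if_pos (by omega)]
      ring
    rw [this]
    refine Finset.sum_subset (Finset.range_subset_range.2 (by omega)) ?_
    intro k hk hk'
    simp only [Finset.mem_range] at hk hk'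
    rw [if_neg (by omega)]
  rw [hL, hR]

lemma layer_poly (s : ℕ) (q A : ℝ[X]) (hq : q.natDegree ≤ s) (len : ℕ)
    (hA : A.natDegree < len) (C C' : ℝ) (hpos : ∀ i, 0 ≤ (q * A).coeff i + C') :
    layer s (polyFilt s q) (fun i => C' - C * convK s q len i) len
      (fun t => if t < len then A.coeff t + C else 0)
    = fun i => if i < len + s then (q * A).coeff i + C' else 0 := by
  funext i
  unfold layer
  split
  · rw [conv_poly s q A hq len hA C i]
    have : (q * A).coeff i + C * convK s q len i + (C' - C * convK s q len i)
        = (q * A).coeff i + C' := by ring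
    rw [this]
    exact max_eq_left (hpos i)
  · rfl

lemma applyCNN_append (s : ℕ) (ps₁ ps₂ : List ((Fin (s + 1) → ℝ) × (ℕ → ℝ))) :
    ∀ (n : ℕ) (x : ℕ → ℝ), applyCNN s (ps₁ ++ ps₂) n x
      = applyCNN s ps₂ (n + ps₁.length * s) (applyCNN s ps₁ n x) := by
  induction ps₁ with
  | nil => intro n x; simp [applyCNN]
  | cons a t ih =>
    intro n x
    show applyCNN s (t ++ ps₂) (n + s) (layer s a.1 a.2 n x) = _
    rw [ih]
    have : n + s + t.length * s = n + (t.length + 1) * s := by ring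
    rw [this]
    rfl

lemma invCNN (s : ℕ) : ∀ (qs : List ℝ[X]), (∀ q ∈ qs, q.natDegree ≤ s) →
    ∀ (len : ℕ) (C D : ℝ), 0 ≤ C → 0 ≤ D →
    ∃ (ps : List ((Fin (s + 1) → ℝ) × (ℕ → ℝ))) (C' : ℝ),
      ps.length = qs.length ∧ 0 ≤ C' ∧
      ∀ A : ℝ[X], A.natDegree < len → (∀ i, |A.coeff i| ≤ D) →
        applyCNN s ps len (fun t => if t < len then A.coeff t + C else 0)
          = fun i => if i < len + qs.length * s then (qs.prod * A).coeff i + C' else 0 := by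
  intro qs
  induction qs with
  | nil =>
    intro _ len C D hC hD
    refine ⟨[], C, rfl, hC, ?_⟩
    intro A hA hAD
    simp [applyCNN]
  | cons q t ih =>
    intro hdeg len C D hC hD
    have hq : q.natDegree ≤ s := hdeg q (List.mem_cons_self)
    have ht : ∀ p ∈ t, p.natDegree ≤ s := fun p hp => hdeg p (List.mem_cons_of_mem q hp)
    have hCD1 : (0:ℝ) ≤ norm1 q * D := mul_nonneg (norm1_nonneg q) hD
    obtain ⟨ps', C', hlen, hC', hmain⟩ := ih ht (len + s) (norm1 q * D) (norm1 q * D) hCD1 hCD1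
    refine ⟨(polyFilt s q, fun i => norm1 q * D - C * convK s q len i) :: ps', C',
      by simp [hlen], hC', ?_⟩
    intro A hA hAD
    show applyCNN s ps' (len + s) (layer s (polyFilt s q) _ len _) = _
    have hpos : ∀ i, 0 ≤ (q * A).coeff i + norm1 q * D := by
      intro i
      have := coeff_mul_bound q A D hAD i
      have := abs_le.mp this
      linarith [this.1]
    rw [layer_poly s q A hq len hA C (norm1 q * D) hpos]
    have hdegQA : (q * A).natDegree < len + s := by
      have h1 := Polynomial.natDegree_mul_le (p := q) (q := A)
      omega
    have hbound : ∀ i, |(q * A).coeff i| ≤ norm1 q * D := coeff_mul_bound q A D hAD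
    rw [hmain (q * A) hdegQA hbound]
    have h1 : len + s + t.length * s = len + (q :: t).length * s := by
      simp [List.length_cons]; ring
    have h2 : t.prod * (q * A) = (q :: t).prod * A := by
      rw [List.prod_cons]; ring
    rw [h1, h2]

lemma extract_prefix : ∀ (L : List ℝ[X]) (a : ℕ), 1 ≤ a → (∀ q ∈ L, q.natDegree ≤ 2) →
    a ≤ (L.map Polynomial.natDegree).sum →
    ∃ P R : List ℝ[X], L = P ++ R ∧ a ≤ (P.map Polynomial.natDegree).sum ∧
      (P.map Polynomial.natDegree).sum ≤ a + 1 := by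
  intro L
  induction L with
  | nil => intro a ha _ hsum; simp at hsum; omega
  | cons q t ih =>
    intro a ha hdeg hsum
    simp only [List.map_cons, List.sum_cons] at hsum
    by_cases h : a ≤ q.natDegree
    · exact ⟨[q], t, rfl, by simpa using h, by
        have := hdeg q (List.mem_cons_self); simp; omega⟩
    · have hq2 : q.natDegree ≤ 2 := hdeg q (List.mem_cons_self)
      obtain ⟨P', R, hsplit, h1, h2⟩ := ih (a - q.natDegree) (by omega)
        (fun p hp => hdeg p (List.mem_cons_of_mem q hp)) (by omega)
      refine ⟨q :: P', R, by rw [hsplit]; rfl, ?_, ?_⟩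
      · simp only [List.map_cons, List.sum_cons]; omega
      · simp only [List.map_cons, List.sum_cons]; omega

lemma grouping (s : ℕ) (hs : 2 ≤ s) : ∀ (d : ℕ) (L : List ℝ[X]),
    (L.map Polynomial.natDegree).sum = d → (∀ q ∈ L, q.natDegree ≤ 2) → 1 ≤ d →
    ∃ L' : List ℝ[X], L'.prod = L.prod ∧ (∀ q ∈ L', q.natDegree ≤ s) ∧
      1 ≤ L'.length ∧ (L'.length - 1) * (s - 1) + 1 ≤ d := by
  intro d
  induction d using Nat.strong_induction_on with
  | _ d ihd =>
    intro L hsum hdeg hd1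
    by_cases hds : d ≤ s
    · refine ⟨[L.prod], by simp, ?_, by simp, by simp; omega⟩
      intro p hp
      simp only [List.mem_singleton] at hp
      subst hp
      calc L.prod.natDegree ≤ (L.map Polynomial.natDegree).sum :=
            Polynomial.natDegree_list_prod_le L
        _ ≤ s := by omega
    · obtain ⟨P, R, rfl, hP1, hP2⟩ := extract_prefix L (s - 1) (by omega) hdeg (by omega)
      have hsplit : (P.map Polynomial.natDegree).sum + (R.map Polynomial.natDegree).sum = d := by
        simp only [List.map_append, List.sum_append] at hsum; omega
      have hRdeg : ∀ q ∈ R, q.natDegree ≤ 2 := fun q hq => hdeg q (by simp [hq])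
      obtain ⟨L'', hp, hdeg'', hlen'', hbound''⟩ :=
        ihd ((R.map Polynomial.natDegree).sum) (by omega) R rfl hRdeg (by omega)
      refine ⟨P.prod :: L'', ?_, ?_, by simp, ?_⟩
      · rw [List.prod_cons, hp, List.prod_append]
      · intro p hp'
        rcases List.mem_cons.mp hp' with h | h
        · subst h
          calc P.prod.natDegree ≤ (P.map Polynomial.natDegree).sum :=
              Polynomial.natDegree_list_prod_le P
            _ ≤ s := by omega
        · exact hdeg'' p h
      · simp only [List.length_cons]
        have e1 : (L''.length + 1 - 1) * (s - 1) = (L''.length - 1) * (s - 1) + (s - 1) := by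
          have : L''.length + 1 - 1 = (L''.length - 1) + 1 := by omega
          rw [this, add_mul, one_mul]
        omega

lemma myFactorization (s : ℕ) (hs : 2 ≤ s) (G : ℕ) (hG : 1 ≤ G) :
    ∃ L : List ℝ[X], L.prod = Polynomial.X ^ G + 1 ∧ (∀ q ∈ L, q.natDegree ≤ s) ∧
      1 ≤ L.length ∧ (L.length - 1) * (s - 1) + 1 ≤ G := by
  set p : ℝ[X] := Polynomial.X ^ G + 1 with hp
  have hpmonic : p.Monic := by
    have : p = Polynomial.X ^ G + Polynomial.C 1 := by rw [map_one]
    rw [this]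
    exact Polynomial.monic_X_pow_add (lt_of_le_of_lt Polynomial.degree_C_le (by exact_mod_cast hG))
  have hp0 : p ≠ 0 := hpmonic.ne_zero
  have hpdeg : p.natDegree = G := by
    have : p = Polynomial.X ^ G + Polynomial.C 1 := by rw [map_one]
    rw [this]
    exact Polynomial.natDegree_X_pow_add_C
  obtain ⟨u, hu⟩ := (UniqueFactorizationMonoid.factors_prod hp0)
  -- (factors p).prod * u = p
  set facs := UniqueFactorizationMonoid.factors p with hfacs
  have hirr : ∀ q ∈ facs, Irreducible q := fun q hq =>
    UniqueFactorizationMonoid.irreducible_of_factor q hq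
  set L0 := facs.toList with hL0
  have hL0mem : ∀ q ∈ L0, Irreducible q := by
    intro q hq
    exact hirr q (by rwa [← Multiset.mem_toList])
  have hL0deg : ∀ q ∈ L0, q.natDegree ≤ 2 := fun q hq => (hL0mem q hq).natDegree_le_two
  have hL0prod : L0.prod = facs.prod := Multiset.prod_toList facs
  have hfacs0 : facs.prod ≠ 0 := by
    intro h
    rw [h, zero_mul] at hu
    exact hp0 hu.symm
  have hudeg : (↑u : ℝ[X]).natDegree = 0 := Polynomial.natDegree_eq_zero_of_isUnit u.isUnit
  have hu0 : (↑u : ℝ[X]) ≠ 0 := Units.ne_zero u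
  have hsumdeg : (L0.map Polynomial.natDegree).sum = G := by
    have h1 : facs.prod.natDegree = G := by
      have := Polynomial.natDegree_mul (hfacs0) hu0
      rw [hu] at this
      omega
    have h0 : (0 : ℝ[X]) ∉ facs := fun h => (hirr 0 h).ne_zero rfl
    have h2 : facs.prod.natDegree = (facs.map Polynomial.natDegree).sum :=
      Polynomial.natDegree_multiset_prod facs h0
    have h3 : (L0.map Polynomial.natDegree).sum = (facs.map Polynomial.natDegree).sum := by
      conv_rhs => rw [← Multiset.coe_toList facs]
      rw [Multiset.map_coe, Multiset.sum_coe]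
    omega
  obtain ⟨L', hLprod, hLdeg, hLlen, hLbound⟩ := grouping s hs G L0 hsumdeg hL0deg hG
  obtain ⟨h, t, rfl⟩ : ∃ h t, L' = h :: t := by
    cases L' with
    | nil => simp at hLlen
    | cons h t => exact ⟨h, t, rfl⟩
  refine ⟨(↑u * h) :: t, ?_, ?_, by simp, by simpa using hLbound⟩
  · rw [List.prod_cons, mul_assoc, ← List.prod_cons (a := h), hLprod, hL0prod, mul_comm, hu]
  · intro q hq
    rcases List.mem_cons.mp hq with hh | hh
    · subst hh
      calc (↑u * h).natDegree ≤ (↑u : ℝ[X]).natDegree + h.natDegree :=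
          Polynomial.natDegree_mul_le
        _ ≤ s := by
          have := hLdeg h (List.mem_cons_self)
          omega
    · exact hLdeg q (List.mem_cons_of_mem h hh)

set_option maxHeartbeats 2000000 in
theorem stmt12 (s : ℕ) (hs : 2 ≤ s) (l k n : ℕ) (hl : 0 < l) (hk : 0 < k) (hn : 0 < n)
    (M : ℝ) (hM : 0 < M) :
    ∃ (J : ℕ) (ps : List ((Fin (s + 1) → ℝ) × (ℕ → ℝ))),
      ps.length = J ∧
      (J : ℝ) ≤ (l : ℝ) * ⌈((n : ℝ) - 1) * k / ((s : ℝ) - 1)⌉ ∧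
      ∃ n₁ n₂ : ℕ, n₁ + n * k + n₂ = (n * k + k * l * (n - 1)) + J * s ∧
        ∀ Y : ℕ → ℕ → ℝ, (∀ a b, Y a b ∈ Set.Icc 0 M) →
          applyCNN s ps (n * k + k * l * (n - 1))
              (fun i =>
                if i < k then Y 0 i
                else if k + k * l * (n - 1) ≤ i ∧ i < n * k + k * l * (n - 1) then
                  Y ((i - k * l * (n - 1)) / k) ((i - k * l * (n - 1)) % k)
                else 0) =
            fun i => if n₁ ≤ i ∧ i < n₁ + n * k then Y ((i - n₁) / k) ((i - n₁) % k) else 0 := by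
  by_cases hn1 : n = 1
  · -- trivial case: no layers needed
    subst hn1
    refine ⟨0, [], rfl, by norm_num, 0, 0, by norm_num, ?_⟩
    intro Y hY
    funext i
    show (if i < k then Y 0 i
        else if k + k * l * (1 - 1) ≤ i ∧ i < 1 * k + k * l * (1 - 1) then
          Y ((i - k * l * (1 - 1)) / k) ((i - k * l * (1 - 1)) % k) else 0)
      = if 0 ≤ i ∧ i < 0 + 1 * k then Y ((i - 0) / k) ((i - 0) % k) else 0
    by_cases hik : i < k
    · rw [if_pos hik, if_pos (by omega : 0 ≤ i ∧ i < 0 + 1 * k)]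
      rw [Nat.sub_zero, Nat.div_eq_of_lt hik, Nat.mod_eq_of_lt hik]
    · rw [if_neg hik, if_neg (by omega : ¬(k + k * l * (1 - 1) ≤ i ∧ i < 1 * k + k * l * (1 - 1))),
        if_neg (by omega : ¬(0 ≤ i ∧ i < 0 + 1 * k))]
  · -- main case : n ≥ 2
    have hn2 : 2 ≤ n := by omega
    -- basic arithmetic facts, established before atomizing products
    have hG1 : 1 ≤ k * l * (n - 1) := Nat.mul_pos (Nat.mul_pos hk hl) (by omega)
    have hkG : k ≤ k * l * (n - 1) := by
      calc k = k * 1 * 1 := by ring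
        _ ≤ k * l * (n - 1) := Nat.mul_le_mul (Nat.mul_le_mul_left k hl) (by omega)
    have hmG : (n - 1) * k ≤ k * l * (n - 1) := by
      calc (n - 1) * k = k * 1 * (n - 1) := by ring
        _ ≤ k * l * (n - 1) := Nat.mul_le_mul_right _ (Nat.mul_le_mul_left k hl)
    have hnk_split : n * k = k + (n - 1) * k := by
      cases n with
      | zero => omega
      | succ m => simp [Nat.succ_sub_one]; ring
    have hnk1 : 1 ≤ n * k := Nat.mul_pos hn hk
    have hGlm : k * l * (n - 1) = l * ((n - 1) * k) := by ring
    -- the ceiling bound data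
    set m := (n - 1) * k with hm
    have hm1 : 1 ≤ m := by
      rw [hm]; exact Nat.mul_pos (by omega) hk
    obtain ⟨cm, r, hdm, hrlt⟩ : ∃ cm r, (s - 1) * cm + r = m + s - 2 ∧ r < s - 1 :=
      ⟨(m + s - 2) / (s - 1), (m + s - 2) % (s - 1), Nat.div_add_mod _ _,
        Nat.mod_lt _ (by omega)⟩
    -- m ≤ cm * (s-1)
    have hm_le : m ≤ cm * (s - 1) := by
      have : (s - 1) * cm = cm * (s - 1) := Nat.mul_comm _ _
      omega
    -- factorization of X^G + 1
    set G := k * l * (n - 1) with hGdef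
    obtain ⟨L, hLprod, hLdeg, hLlen, hLbound⟩ := myFactorization s hs G hG1
    rcases L.eq_nil_or_concat' with hnil | ⟨L', qJ, rfl⟩
    · rw [hnil] at hLlen; simp at hLlen
    have hJlen : (L' ++ [qJ]).length = L'.length + 1 := by simp
    rw [hJlen] at hLbound
    have hL'deg : ∀ q ∈ L', q.natDegree ≤ s := fun q hq => hLdeg q (by simp [hq])
    have hqJdeg : qJ.natDegree ≤ s := hLdeg qJ (by simp)
    set nk := n * k with hnk
    set N := nk + G with hNdef
    obtain ⟨ps', C', hpslen, hC'0, hmain⟩ := invCNN s L' hL'deg N 0 M le_rfl (le_of_lt hM)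
    set len1 := N + L'.length * s with hlen1
    have hNlen1 : N ≤ len1 := by rw [hlen1]; exact Nat.le_add_right _ _
    refine ⟨L'.length + 1,
      ps' ++ [(polyFilt s qJ, fun i =>
        if G ≤ i ∧ i < G + nk then -(C' * convK s qJ len1 i)
        else -(C' * convK s qJ len1 i) - 2 * M)],
      by simp [hpslen], ?_, G, (L'.length + 1) * s, by ring, ?_⟩
    · -- the depth bound
      have hLb2 : L'.length * (s - 1) + 1 ≤ G := by simpa using hLbound
      have hJcm : L'.length + 1 ≤ l * cm := by
        have h1 : G ≤ l * cm * (s - 1) := by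
          rw [hGlm]
          calc l * m ≤ l * (cm * (s - 1)) := Nat.mul_le_mul_left l hm_le
            _ = l * cm * (s - 1) := by ring
        have h2 : L'.length * (s - 1) < l * cm * (s - 1) := by omega
        have h3 : L'.length < l * cm := lt_of_mul_lt_mul_right h2 (Nat.zero_le _)
        omega
      have hceil : (cm : ℤ) ≤ ⌈((n : ℝ) - 1) * k / ((s : ℝ) - 1)⌉ := by
        have hcast : ((n : ℝ) - 1) * k = (m : ℝ) := by
          rw [hm]
          push_cast [Nat.cast_sub (by omega : 1 ≤ n)]
          ring
        have hs1pos : (0 : ℝ) < (s : ℝ) - 1 := by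
          have : (2 : ℝ) ≤ s := by exact_mod_cast hs
          linarith
        have hlt : ((cm : ℤ) - 1 : ℝ) < ((n : ℝ) - 1) * k / ((s : ℝ) - 1) := by
          rw [hcast, lt_div_iff₀ hs1pos]
          rcases Nat.eq_zero_or_pos cm with hcm0 | hcm1
          · subst hcm0
            push_cast
            nlinarith [hm1, (show (1:ℝ) ≤ (m:ℝ) by exact_mod_cast hm1)]
          · obtain ⟨c, rfl⟩ : ∃ c, cm = c + 1 := ⟨cm - 1, by omega⟩
            have hnat : c * (s - 1) < m := by
              have he : (s - 1) * (c + 1) = (s - 1) * c + (s - 1) := by ring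
              have hcomm : (s - 1) * c = c * (s - 1) := Nat.mul_comm _ _
              omega
            have : ((c * (s - 1) : ℕ) : ℝ) < (m : ℝ) := by exact_mod_cast hnat
            push_cast [Nat.cast_sub (by omega : 1 ≤ s)] at this ⊢
            nlinarith
        have := Int.lt_ceil.mpr (by exact_mod_cast hlt :
          ((cm : ℤ) - 1 : ℤ) < (((n : ℝ) - 1) * k / ((s : ℝ) - 1) : ℝ))
        omega
      have h1 : ((L'.length + 1 : ℕ) : ℝ) ≤ ((l * cm : ℕ) : ℝ) := by exact_mod_cast hJcm
      have h2 : ((l * cm : ℕ) : ℝ) ≤ (l : ℝ) * (⌈((n : ℝ) - 1) * k / ((s : ℝ) - 1)⌉ : ℝ) := by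
        push_cast
        have : (cm : ℝ) ≤ (⌈((n : ℝ) - 1) * k / ((s : ℝ) - 1)⌉ : ℝ) := by exact_mod_cast hceil
        have hl0 : (0 : ℝ) ≤ l := by positivity
        nlinarith
      calc ((L'.length + 1 : ℕ) : ℝ) ≤ _ := h1
        _ ≤ _ := h2
    · -- the main computation
      intro Y hY
      have hY0 : ∀ a b, 0 ≤ Y a b := fun a b => (hY a b).1
      have hYM : ∀ a b, Y a b ≤ M := fun a b => (hY a b).2
      set xin : ℕ → ℝ := fun i =>
        if i < k then Y 0 i
        else if k + G ≤ i ∧ i < N then Y ((i - G) / k) ((i - G) % k)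
        else 0 with hxin
      set A : ℝ[X] := ∑ j ∈ Finset.range N, Polynomial.C (xin j) * Polynomial.X ^ j with hA
      have hcoeff : ∀ j, A.coeff j = if j < N then xin j else 0 := by
        intro j
        rw [hA, Polynomial.finset_sum_coeff]
        simp [Polynomial.coeff_C_mul, Polynomial.coeff_X_pow, Finset.sum_ite_eq,
          Finset.sum_ite_eq', Finset.mem_range, eq_comm]
      have hxinB : ∀ j, 0 ≤ xin j ∧ xin j ≤ M := by
        intro j
        rw [hxin]
        dsimp only
        split
        · exact ⟨hY0 _ _, hYM _ _⟩
        · split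
          · exact ⟨hY0 _ _, hYM _ _⟩
          · exact ⟨le_refl 0, le_of_lt hM⟩
      have hAc : ∀ j, 0 ≤ A.coeff j ∧ A.coeff j ≤ M := by
        intro j
        rw [hcoeff]
        split
        · exact hxinB j
        · exact ⟨le_refl 0, le_of_lt hM⟩
      have habs : ∀ j, |A.coeff j| ≤ M := fun j =>
        abs_le.mpr ⟨by linarith [(hAc j).1, hM], (hAc j).2⟩
      have hN1 : 1 ≤ N := by omega
      have hAdeg : A.natDegree < N := by
        have h1 : A.natDegree ≤ N - 1 := by
          rw [hA]
          refine Polynomial.natDegree_sum_le_of_forall_le _ _ ?_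
          intro j hj
          rw [Finset.mem_range] at hj
          refine le_trans (Polynomial.natDegree_C_mul_le _ _) ?_
          rw [Polynomial.natDegree_X_pow]
          omega
        omega
      have hinput : xin = fun t => if t < N then A.coeff t + 0 else 0 := by
        funext t
        by_cases h : t < N
        · rw [if_pos h, hcoeff t, if_pos h, add_zero]
        · rw [if_neg h, hxin]
          dsimp only
          rw [if_neg (by omega : ¬ t < k),
            if_neg (fun hcon => h hcon.2)]
      rw [hinput, applyCNN_append, hpslen]
      rw [hmain A hAdeg habs]
      show layer s (polyFilt s qJ)
          (fun i => if G ≤ i ∧ i < G + nk then -(C' * convK s qJ len1 i)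
            else -(C' * convK s qJ len1 i) - 2 * M) len1
          (fun t => if t < len1 then (L'.prod * A).coeff t + C' else 0) = _
      funext i
      simp only [layer]
      have hBdeg : (L'.prod * A).natDegree < len1 := by
        have h1 : L'.prod.natDegree ≤ L'.length * s := by
          refine le_trans (Polynomial.natDegree_list_prod_le L') ?_
          have := List.sum_le_card_nsmul (L'.map Polynomial.natDegree) s
            (by intro x hx
                obtain ⟨q, hq, rfl⟩ := List.mem_map.mp hx
                exact hL'deg q hq)
          simpa [smul_eq_mul] using this
        calc (L'.prod * A).natDegree ≤ L'.prod.natDegree + A.natDegree :=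
            Polynomial.natDegree_mul_le
          _ < L'.length * s + N := by omega
          _ = len1 := by rw [hlen1]; ring
      have hconv := conv_poly s qJ (L'.prod * A) hqJdeg len1 hBdeg C' i
      have hfull : qJ * (L'.prod * A) = (Polynomial.X ^ G + 1) * A := by
        have h1 : (L' ++ [qJ]).prod = L'.prod * qJ := by simp
        rw [← hLprod, h1]; ring
      have hcoefffull : ((Polynomial.X ^ G + 1) * A).coeff i
          = (if G ≤ i then A.coeff (i - G) else 0) + A.coeff i := by
        have h1 : (Polynomial.X ^ G + 1) * A = A * Polynomial.X ^ G + A := by ring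
        rw [h1, Polynomial.coeff_add, Polynomial.coeff_mul_X_pow']
      by_cases hrange : i < len1 + s
      · rw [if_pos hrange, hconv, hfull, hcoefffull]
        by_cases hiW : G ≤ i ∧ i < G + nk
        · rw [if_pos hiW.1, if_pos hiW, if_pos hiW]
          have heq : A.coeff (i - G) + A.coeff i + C' * convK s qJ len1 i
              + -(C' * convK s qJ len1 i) = A.coeff (i - G) + A.coeff i := by ring
          rw [heq]
          rcases Nat.lt_or_ge i (G + k) with hik | hik
          · -- first block of the window
            have e1 : A.coeff i = 0 := by
              rw [hcoeff, if_pos (by omega : i < N), hxin]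
              dsimp only
              rw [if_neg (by omega : ¬ i < k), if_neg (by omega : ¬(k + G ≤ i ∧ i < N))]
            have e2 : A.coeff (i - G) = Y 0 (i - G) := by
              rw [hcoeff, if_pos (by omega : i - G < N), hxin]
              dsimp only
              rw [if_pos (by omega : i - G < k)]
            rw [e1, e2, add_zero]
            rw [Nat.div_eq_of_lt (by omega : i - G < k), Nat.mod_eq_of_lt (by omega : i - G < k)]
            exact relu_of_nonneg (hY0 _ _)
          · -- remaining blocks of the window
            have e1 : A.coeff i = Y ((i - G) / k) ((i - G) % k) := by
              rw [hcoeff, if_pos (by omega : i < N), hxin]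
              dsimp only
              rw [if_neg (by omega : ¬ i < k), if_pos (by omega : k + G ≤ i ∧ i < N)]
            have e2 : A.coeff (i - G) = 0 := by
              rw [hcoeff, if_pos (by omega : i - G < N), hxin]
              dsimp only
              rw [if_neg (by omega : ¬ i - G < k),
                if_neg (by omega : ¬(k + G ≤ i - G ∧ i - G < N))]
            rw [e1, e2, zero_add]
            exact relu_of_nonneg (hY0 _ _)
        · rw [if_neg hiW, if_neg hiW]
          have heq : (if G ≤ i then A.coeff (i - G) else 0) + A.coeff i
              + C' * convK s qJ len1 i + (-(C' * convK s qJ len1 i) - 2 * M)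
              = (if G ≤ i then A.coeff (i - G) else 0) + A.coeff i - 2 * M := by ring
          rw [heq]
          refine relu_of_nonpos ?_
          have h1 : (if G ≤ i then A.coeff (i - G) else 0) ≤ M := by
            split
            · exact (hAc _).2
            · linarith
          linarith [(hAc i).2]
      · rw [if_neg hrange, if_neg (by omega : ¬(G ≤ i ∧ i < G + nk))]
end
end

section
/- Let c ∈ ℝ, h > 0, and let α ≥ 2 be an integer. Let t_1, …, t_α ∈ ℝ satisfy t_1 = c+h, t_2 = c−h, and t_k ∉ (c−h, c+h) for all 3 ≤ k ≤ α. Then for every x ∈ ℝ, the product ∏_{k=1}^α σ((x−t_k)/(c−t_k)) equals ∏_{k=1}^α (x−t_k)/(c−t_k) if x ∈ [c−h, c+h], and equals 0 if x ∉ [c−h, c+h], where σ(t) = max(t,0). -/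
noncomputable section

open Finset

theorem stmt17 (c h : ℝ) (hh : 0 < h) (α : ℕ) (hα : 2 ≤ α) (t : ℕ → ℝ)
    (ht1 : t 1 = c + h) (ht2 : t 2 = c - h)
    (ht : ∀ k, 3 ≤ k → k ≤ α → t k ∉ Set.Ioo (c - h) (c + h)) :
    ∀ x : ℝ,
      ∏ k ∈ Finset.Icc 1 α, relu ((x - t k) / (c - t k)) =
        if x ∈ Set.Icc (c - h) (c + h) then ∏ k ∈ Finset.Icc 1 α, (x - t k) / (c - t k)
        else 0 := by
  intro x
  split_ifs with hx
  · obtain ⟨hx1, hx2⟩ := hx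
    apply Finset.prod_congr rfl
    intro k hk
    simp only [Finset.mem_Icc] at hk
    have hnn : 0 ≤ (x - t k) / (c - t k) := by
      rcases eq_or_lt_of_le hk.1 with h1 | h1
      · rw [← h1, ht1]
        apply div_nonneg_of_nonpos <;> linarith
      · rcases eq_or_lt_of_le (Nat.succ_le_of_lt h1) with h2 | h2
        · rw [← h2, ht2]
          apply div_nonneg <;> linarith
        · have h3 : 3 ≤ k := h2
          have := ht k h3 hk.2
          simp only [Set.mem_Ioo, not_and, not_lt] at this
          rcases le_or_gt (t k) (c - h) with h4 | h4
          · apply div_nonneg <;> linarith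
          · have h5 := this h4
            apply div_nonneg_of_nonpos <;> linarith
    unfold relu
    exact max_eq_left hnn
  · simp only [Set.mem_Icc, not_and, not_le] at hx
    rcases le_or_gt (c - h) x with h1 | h1
    · have h2 := hx h1
      apply Finset.prod_eq_zero (i := 1)
      · simp [Finset.mem_Icc]; omega
      · unfold relu
        rw [ht1, max_eq_right]
        apply div_nonpos_of_nonneg_of_nonpos <;> linarith
    · apply Finset.prod_eq_zero (i := 2)
      · simp [Finset.mem_Icc]; omega
      · unfold relu
        rw [ht2, max_eq_right]
        apply div_nonpos_of_nonpos_of_nonneg <;> linarith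
end
end
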